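/- In the KLR algebra R(ν), for adjacent vertices (i·j = -1), the sequence i' i j i i'' (with i not adjacent to any vertex of i'' and j not adjacent to any vertex of i'' either) has an m-factorization through the two sequences i' j i i'' i and i' i i'' i j, arising from the cubic relation δ-three-strand identity ψ_L − ψ_R = 1 applied at the iji triple. -/

import Mathlib

/-!
The cubic relation at the triple `i j i` gives `1_q = ψ_L - ψ_R` with `ψ_L = δ_r δ_{r+1} δ_r` and
`ψ_R = δ_{r+1} δ_r δ_{r+1}`. Each crossing of orthogonal colours squares to the identity, so
above the lower crossing of `ψ_L` (which produces `i' j i i i''`) the last `i`-strand can be pulled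
past `i''` to the far right and back for free; in `ψ_R` the same is done with the `j`-strand and
then with the `i`-strand. This factors `ψ_L` through `i' j i i'' i` and `ψ_R` through
`i' i i'' i j`. The dot on the last strand of `i''` only ever meets strands of other colours, so
it slides through all these diagrams.
-/

namespace KLRPaper


/-- The sequence obtained from `i` by swapping the entries in positions `r` and `r+1`
(0-indexed); identity if `r+1` is out of range. -/
def swapSeq {I : Type} {m : ℕ} (r : ℕ) (i : Fin m → I) : Fin m → I :=
  fun k =>
    if h : r + 1 < m then
      i (Equiv.swap (⟨r, Nat.lt_of_succ_lt h⟩ : Fin m) (⟨r + 1, h⟩ : Fin m) k)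
    else i k

/-- The Khovanov–Lauda–Rouquier algebra of a simply-laced quiver with vertex set `I`
and adjacency relation `adj`, on `m` strands, presented by its generators
(idempotents `e i`, dots `x r i`, crossings `δ r i`) and the KLR relations. -/
structure KLR (I : Type) [DecidableEq I] (adj : I → I → Prop) (m : ℕ)
    (A : Type) [Ring A] where
  e : (Fin m → I) → A
  x : Fin m → (Fin m → I) → A
  δ : ℕ → (Fin m → I) → A
  e_mul_e : ∀ i j, e i * e j = if i = j then e i else 0
  e_mul_x : ∀ r i, e i * x r i = x r i
  x_mul_e : ∀ r i, x r i * e i = x r i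
  x_mul_x : ∀ r s i, x r i * x s i = x s i * x r i
  e_mul_δ : ∀ (r : ℕ) (i : Fin m → I), e (swapSeq r i) * δ r i = δ r i
  δ_mul_e : ∀ (r : ℕ) (i : Fin m → I), δ r i * e i = δ r i
  δδ_same : ∀ (r : ℕ) (h : r + 1 < m) (i : Fin m → I),
    i ⟨r, Nat.lt_of_succ_lt h⟩ = i ⟨r + 1, h⟩ →
    δ r (swapSeq r i) * δ r i = 0
  δδ_orth : ∀ (r : ℕ) (h : r + 1 < m) (i : Fin m → I),
    i ⟨r, Nat.lt_of_succ_lt h⟩ ≠ i ⟨r + 1, h⟩ →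
    ¬ adj (i ⟨r, Nat.lt_of_succ_lt h⟩) (i ⟨r + 1, h⟩) →
    δ r (swapSeq r i) * δ r i = e i
  δδ_adj : ∀ (r : ℕ) (h : r + 1 < m) (i : Fin m → I),
    adj (i ⟨r, Nat.lt_of_succ_lt h⟩) (i ⟨r + 1, h⟩) →
    δ r (swapSeq r i) * δ r i = x ⟨r, Nat.lt_of_succ_lt h⟩ i + x ⟨r + 1, h⟩ i
  δx_far : ∀ (r : ℕ) (s : Fin m) (i : Fin m → I), s.val ≠ r → s.val ≠ r + 1 →
    δ r i * x s i = x s (swapSeq r i) * δ r i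
  δx_diff1 : ∀ (r : ℕ) (h : r + 1 < m) (i : Fin m → I),
    i ⟨r, Nat.lt_of_succ_lt h⟩ ≠ i ⟨r + 1, h⟩ →
    δ r i * x ⟨r, Nat.lt_of_succ_lt h⟩ i = x ⟨r + 1, h⟩ (swapSeq r i) * δ r i
  δx_diff2 : ∀ (r : ℕ) (h : r + 1 < m) (i : Fin m → I),
    i ⟨r, Nat.lt_of_succ_lt h⟩ ≠ i ⟨r + 1, h⟩ →
    δ r i * x ⟨r + 1, h⟩ i = x ⟨r, Nat.lt_of_succ_lt h⟩ (swapSeq r i) * δ r i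
  δx_same1 : ∀ (r : ℕ) (h : r + 1 < m) (i : Fin m → I),
    i ⟨r, Nat.lt_of_succ_lt h⟩ = i ⟨r + 1, h⟩ →
    δ r i * x ⟨r, Nat.lt_of_succ_lt h⟩ i - x ⟨r + 1, h⟩ (swapSeq r i) * δ r i = e i
  δx_same2 : ∀ (r : ℕ) (h : r + 1 < m) (i : Fin m → I),
    i ⟨r, Nat.lt_of_succ_lt h⟩ = i ⟨r + 1, h⟩ →
    x ⟨r, Nat.lt_of_succ_lt h⟩ (swapSeq r i) * δ r i - δ r i * x ⟨r + 1, h⟩ i = e i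
  braid_easy : ∀ (r : ℕ) (h : r + 2 < m) (i : Fin m → I),
    ¬ (i ⟨r, by omega⟩ = i ⟨r + 2, h⟩ ∧ adj (i ⟨r, by omega⟩) (i ⟨r + 1, by omega⟩)) →
    δ r (swapSeq (r + 1) (swapSeq r i)) * δ (r + 1) (swapSeq r i) * δ r i =
      δ (r + 1) (swapSeq r (swapSeq (r + 1) i)) * δ r (swapSeq (r + 1) i) * δ (r + 1) i
  braid_hard : ∀ (r : ℕ) (h : r + 2 < m) (i : Fin m → I),
    i ⟨r, by omega⟩ = i ⟨r + 2, h⟩ → adj (i ⟨r, by omega⟩) (i ⟨r + 1, by omega⟩) →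
    δ r (swapSeq (r + 1) (swapSeq r i)) * δ (r + 1) (swapSeq r i) * δ r i -
      δ (r + 1) (swapSeq r (swapSeq (r + 1) i)) * δ r (swapSeq (r + 1) i) * δ (r + 1) i
      = e i

/-- The cyclotomic quotient `R_ν^Λ` of the KLR algebra at the dominant weight
`Λ = Σ λ_i · i` (a finitely supported function `I →₀ ℕ`): it additionally satisfies
`x_{1,i}^{λ_{i₁}} 1_i = 0` for every sequence `i`. -/
structure CycKLR (I : Type) [DecidableEq I] (adj : I → I → Prop) (m : ℕ)
    (A : Type) [Ring A] (Λ : I →₀ ℕ) extends KLR I adj m A where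
  cyc : ∀ (h : 0 < m) (i : Fin m → I), x ⟨0, h⟩ i ^ Λ (i ⟨0, h⟩) * e i = 0



/-- `i` has an `r`-factorization through the finite family of sequences `j a`
(with the `r`-th strand of `i` occurring at position `t a` of `j a`): the
idempotent `1_i` factors as `Σ_a u_a v_a` where `u_a ∈ 1_i A 1_{j_a}` and
`v_a ∈ 1_{j_a} A 1_i` are built from the minimal diagrams `(_{i}1_{j_a})` and
`(_{j_a}1_{i})` bordered by elements of `R_{i',i_r,i'''}`, so that the dot on the
`r`-th strand of `i` slides through them onto the `t a`-th strand of `j a`. -/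
def RFactorization {I : Type} [DecidableEq I] {adj : I → I → Prop} {m : ℕ}
    {A : Type} [Ring A] (K : KLR I adj m A) (i : Fin m → I) (r : Fin m)
    {n : ℕ} (j : Fin n → (Fin m → I)) (t : Fin n → Fin m) : Prop :=
  ∃ u v : Fin n → A,
    (∀ a, u a = K.e i * u a * K.e (j a)) ∧
    (∀ a, v a = K.e (j a) * v a * K.e i) ∧
    (∀ a, K.x r i * u a = u a * K.x (t a) (j a)) ∧
    (∀ a, K.x (t a) (j a) * v a = v a * K.x r i) ∧
    K.e i = ∑ a, u a * v a

/-- The sequence `i' j i i'' i`: the third strand of the triple `i j i` (at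
positions `r, r+1, r+2`) is pulled to the far right past `i''`, and the first
two entries of the triple are transposed. -/
def pullSeq1 {I : Type} {m : ℕ} (r : ℕ) (hr : r + 2 < m) (q : Fin m → I) :
    Fin m → I := fun k =>
  if k.val < r then q k
  else if k.val = r then q ⟨r + 1, by omega⟩
  else if k.val = r + 1 then q ⟨r, by omega⟩
  else if h : k.val + 1 < m then q ⟨k.val + 1, h⟩
  else q ⟨r, by omega⟩

/-- The sequence `i' i i'' i j`: the last two strands of the triple `i j i` (at
positions `r, r+1, r+2`) are pulled to the far right past `i''`. -/
def pullSeq2 {I : Type} {m : ℕ} (r : ℕ) (hr : r + 2 < m) (q : Fin m → I) :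
    Fin m → I := fun k =>
  if k.val ≤ r then q k
  else if h : k.val + 2 < m then q ⟨k.val + 2, h⟩
  else if k.val = m - 2 then q ⟨r, by omega⟩
  else q ⟨r + 1, by omega⟩


section Sequences

variable {I : Type} {m : ℕ}

theorem swapSeq_apply {a : ℕ} (h : a + 1 < m) (c : Fin m → I) (k : Fin m) :
    swapSeq a c k =
      if k.val = a then c ⟨a + 1, h⟩
      else if k.val = a + 1 then c ⟨a, by omega⟩
      else c k := by
  rw [swapSeq, dif_pos h, Equiv.swap_apply_def, apply_ite c, apply_ite c]
  simp only [Fin.ext_iff]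

theorem swapSeq_apply_of_ne {a : ℕ} (c : Fin m → I) {k : Fin m} (hka : k.val ≠ a)
    (hka' : k.val ≠ a + 1) : swapSeq a c k = c k := by
  by_cases h : a + 1 < m
  · rw [swapSeq_apply h, if_neg hka, if_neg hka']
  · simp [swapSeq, h]

theorem swapSeq_swapSeq (a : ℕ) (c : Fin m → I) : swapSeq a (swapSeq a c) = c := by
  funext k
  by_cases h : a + 1 < m <;> simp [swapSeq, h]

theorem swapSeq_eq_self {a : ℕ} (h : a + 1 < m) {c : Fin m → I}
    (hc : c ⟨a, by omega⟩ = c ⟨a + 1, h⟩) : swapSeq a c = c := by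
  funext k
  rw [swapSeq_apply h]
  split_ifs with h₁ h₂
  · rw [← hc]; exact congrArg c (Fin.ext h₁.symm)
  · rw [hc]; exact congrArg c (Fin.ext h₂.symm)
  · rfl

def moveRight (a : ℕ) : ℕ → (Fin m → I) → Fin m → I
  | 0, c => c
  | L + 1, c => swapSeq (a + L) (moveRight a L c)

theorem moveRight_apply {a L : ℕ} (h : a + L < m) (c : Fin m → I) (k : Fin m) :
    moveRight a L c k =
      if k.val < a then c k
      else if hk : k.val < a + L then c ⟨k.val + 1, by omega⟩
      else if k.val = a + L then c ⟨a, by omega⟩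
      else c k := by
  induction L generalizing k with
  | zero =>
    simp only [moveRight, Nat.add_zero]
    split_ifs with h₁ h₂ <;> first | rfl | omega | exact congrArg c (Fin.ext (by simp only; omega))
  | succ L ih =>
    rw [moveRight, swapSeq_apply (by omega)]
    simp only [ih (by omega)]
    split_ifs <;> first | rfl | omega | exact congrArg c (Fin.ext (by simp only; omega))

theorem moveRight_apply_self_add {a L : ℕ} (h : a + L < m) (c : Fin m → I) :
    moveRight a L c ⟨a + L, h⟩ = c ⟨a, by omega⟩ := by
  rw [moveRight_apply h]; simp

theorem moveRight_apply_of_lt {a L : ℕ} (c : Fin m → I) {k : Fin m} (hk : a + L < k.val) :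
    moveRight a L c k = c k := by
  rw [moveRight_apply (by omega), if_neg (by omega), dif_neg (by omega), if_neg (by omega)]

end Sequences

section Transport

variable {I : Type} [DecidableEq I] {adj : I → I → Prop} {m : ℕ} {A : Type} [Ring A]
  (K : KLR I adj m A)

/-- One summand of an `RFactorization`: `u` plays the role of `(_{i}1_{j})` and `v` of
`(_{j}1_{i})`. -/
structure DotTransport (i : Fin m → I) (p : Fin m) (j : Fin m → I) (t : Fin m) (u v : A) :
    Prop where
  e_mul_u : K.e i * u = u
  u_mul_e : u * K.e j = u
  e_mul_v : K.e j * v = v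
  v_mul_e : v * K.e i = v
  x_mul_u : K.x p i * u = u * K.x t j
  x_mul_v : K.x t j * v = v * K.x p i

structure InvDotTransport (i : Fin m → I) (p : Fin m) (j : Fin m → I) (t : Fin m) (u v : A) : Prop
    extends DotTransport K i p j t u v where
  mul_eq_e : u * v = K.e i

variable {K} {i j k : Fin m → I} {p t s : Fin m} {u v u' v' : A}

theorem invDotTransport_refl (c : Fin m → I) (p : Fin m) :
    InvDotTransport K c p c p (K.e c) (K.e c) where
  e_mul_u := by rw [K.e_mul_e, if_pos rfl]
  u_mul_e := by rw [K.e_mul_e, if_pos rfl]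
  e_mul_v := by rw [K.e_mul_e, if_pos rfl]
  v_mul_e := by rw [K.e_mul_e, if_pos rfl]
  x_mul_u := by rw [K.x_mul_e, K.e_mul_x]
  x_mul_v := by rw [K.x_mul_e, K.e_mul_x]
  mul_eq_e := by rw [K.e_mul_e, if_pos rfl]

theorem DotTransport.comp (h : DotTransport K i p j t u v) (h' : DotTransport K j t k s u' v') :
    DotTransport K i p k s (u * u') (v' * v) where
  e_mul_u := by rw [← mul_assoc, h.e_mul_u]
  u_mul_e := by rw [mul_assoc, h'.u_mul_e]
  e_mul_v := by rw [← mul_assoc, h'.e_mul_v]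
  v_mul_e := by rw [mul_assoc, h.v_mul_e]
  x_mul_u := by rw [← mul_assoc, h.x_mul_u, mul_assoc, h'.x_mul_u, mul_assoc]
  x_mul_v := by rw [← mul_assoc, h'.x_mul_v, mul_assoc, h.x_mul_v, mul_assoc]

theorem DotTransport.comp_mul_comp (h : DotTransport K i p j t u v)
    (h' : InvDotTransport K j t k s u' v') : u * u' * (v' * v) = u * v := by
  rw [mul_assoc, ← mul_assoc u', h'.mul_eq_e, ← mul_assoc, h.u_mul_e]

theorem InvDotTransport.comp (h : InvDotTransport K i p j t u v)
    (h' : InvDotTransport K j t k s u' v') : InvDotTransport K i p k s (u * u') (v' * v) where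
  toDotTransport := h.toDotTransport.comp h'.toDotTransport
  mul_eq_e := by rw [h.toDotTransport.comp_mul_comp h', h.mul_eq_e]

theorem DotTransport.neg_left (h : DotTransport K i p j t u v) : DotTransport K i p j t (-u) v where
  e_mul_u := by rw [mul_neg, h.e_mul_u]
  u_mul_e := by rw [neg_mul, h.u_mul_e]
  e_mul_v := h.e_mul_v
  v_mul_e := h.v_mul_e
  x_mul_u := by rw [mul_neg, neg_mul, h.x_mul_u]
  x_mul_v := h.x_mul_v

theorem DotTransport.mul_crossing_of_swapSeq_eq {a : ℕ} (h : DotTransport K i p j t u v)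
    (hj : swapSeq a j = j) (hta : t.val ≠ a) (hta' : t.val ≠ a + 1) :
    DotTransport K i p j t (u * K.δ a j) v where
  e_mul_u := by rw [← mul_assoc, h.e_mul_u]
  u_mul_e := by rw [mul_assoc, K.δ_mul_e]
  e_mul_v := h.e_mul_v
  v_mul_e := h.v_mul_e
  x_mul_u := by
    have hx := K.δx_far a t j hta hta'
    rw [hj] at hx
    rw [← mul_assoc, h.x_mul_u, mul_assoc, ← hx, mul_assoc]
  x_mul_v := h.x_mul_v

theorem dotTransport_crossing_of_far (c : Fin m → I) {a : ℕ} {p : Fin m} (hpa : p.val ≠ a)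
    (hpa' : p.val ≠ a + 1) :
    DotTransport K c p (swapSeq a c) p (K.δ a (swapSeq a c)) (K.δ a c) where
  e_mul_u := by simpa only [swapSeq_swapSeq] using K.e_mul_δ a (swapSeq a c)
  u_mul_e := K.δ_mul_e a _
  e_mul_v := K.e_mul_δ a c
  v_mul_e := K.δ_mul_e a c
  x_mul_u := by simpa only [swapSeq_swapSeq] using (K.δx_far a p (swapSeq a c) hpa hpa').symm
  x_mul_v := (K.δx_far a p c hpa hpa').symm

theorem dotTransport_crossing_of_ne (c : Fin m → I) {a : ℕ} (h : a + 1 < m)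
    (hne : c ⟨a, by omega⟩ ≠ c ⟨a + 1, h⟩) :
    DotTransport K c ⟨a + 1, h⟩ (swapSeq a c) ⟨a, by omega⟩ (K.δ a (swapSeq a c)) (K.δ a c) where
  e_mul_u := by simpa only [swapSeq_swapSeq] using K.e_mul_δ a (swapSeq a c)
  u_mul_e := K.δ_mul_e a _
  e_mul_v := K.e_mul_δ a c
  v_mul_e := K.δ_mul_e a c
  x_mul_u := by
    have hne' : swapSeq a c ⟨a, by omega⟩ ≠ swapSeq a c ⟨a + 1, h⟩ := by
      simpa [swapSeq_apply h] using hne.symm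
    simpa only [swapSeq_swapSeq] using (K.δx_diff1 a h (swapSeq a c) hne').symm
  x_mul_v := (K.δx_diff2 a h c hne).symm

theorem exists_invDotTransport_moveRight_of_lt {c : Fin m → I} {a L : ℕ} {p : Fin m}
    (hp : a + L < p.val)
    (horth : ∀ k : Fin m, a < k.val → k.val ≤ a + L →
      c ⟨a, by omega⟩ ≠ c k ∧ ¬ adj (c ⟨a, by omega⟩) (c k)) :
    ∃ u v, InvDotTransport K c p (moveRight a L c) p u v := by
  induction L with
  | zero => exact ⟨_, _, invDotTransport_refl c p⟩
  | succ L ih =>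
    obtain ⟨u, v, huv⟩ := ih (by omega) fun k hk _ => horth k hk (by omega)
    have hstep := horth ⟨a + L + 1, by omega⟩ (by simp) (by simp)
    refine ⟨_, _, huv.comp ⟨dotTransport_crossing_of_far (moveRight a L c) (by omega) (by omega),
      K.δδ_orth (a + L) (by omega) _ ?_ ?_⟩⟩ <;>
      rw [moveRight_apply_self_add, moveRight_apply_of_lt _ (by simp only; omega)]
    exacts [hstep.1, hstep.2]

theorem exists_invDotTransport_moveRight {c : Fin m → I} {a L : ℕ} (h : a + L + 1 < m)
    (horth : ∀ k : Fin m, a < k.val → k.val ≤ a + L + 1 →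
      c ⟨a, by omega⟩ ≠ c k ∧ ¬ adj (c ⟨a, by omega⟩) (c k))
    {p t : Fin m} (hp : p.val = a + L + 1) (ht : t.val = a + L) :
    ∃ u v, InvDotTransport K c p (moveRight a (L + 1) c) t u v := by
  obtain rfl : p = ⟨a + L + 1, h⟩ := Fin.ext hp
  obtain rfl : t = ⟨a + L, Nat.lt_of_succ_lt h⟩ := Fin.ext ht
  obtain ⟨u, v, huv⟩ := exists_invDotTransport_moveRight_of_lt (K := K) (L := L)
    (p := ⟨a + L + 1, h⟩) (by simp) fun k hk _ => horth k hk (by omega)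
  have hstep := horth ⟨a + L + 1, h⟩ (by simp) (by simp)
  refine ⟨_, _, huv.comp ⟨dotTransport_crossing_of_ne (moveRight a L c) h ?_,
    K.δδ_orth (a + L) h _ ?_ ?_⟩⟩ <;>
    rw [moveRight_apply_self_add, moveRight_apply_of_lt _ (by simp only; omega)]
  exacts [hstep.1, hstep.1, hstep.2]

theorem rFactorization_of_dotTransport {i : Fin m → I} {r : Fin m} {n : ℕ}
    {j : Fin n → Fin m → I} {t : Fin n → Fin m} (u v : Fin n → A)
    (h : ∀ a, DotTransport K i r (j a) (t a) (u a) (v a)) (he : K.e i = ∑ a, u a * v a) :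
    RFactorization K i r j t :=
  ⟨u, v, fun a => by rw [mul_assoc, (h a).u_mul_e, (h a).e_mul_u],
    fun a => by rw [mul_assoc, (h a).v_mul_e, (h a).e_mul_v], fun a => (h a).x_mul_u,
    fun a => (h a).x_mul_v, he⟩

end Transport

section IjiSequences

variable {I : Type} {m : ℕ} {q : Fin m → I} {r L : ℕ}

theorem pullSeq1_eq_moveRight (hr : r + 2 < m) (hL : r + 3 + L = m)
    (haa : q ⟨r + 2, hr⟩ = q ⟨r, by omega⟩) :
    pullSeq1 r hr q = moveRight (r + 2) L (swapSeq r q) := by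
  funext ⟨k, hk⟩
  rw [moveRight_apply (by omega)]
  simp only [pullSeq1, swapSeq_apply (show r + 1 < m by omega)]
  split_ifs <;> first
    | rfl
    | omega
    | (congr 1; ext; simp only; omega)
    | rw [← haa]

theorem pullSeq2_eq_moveRight (hr : r + 2 < m) (hL : r + 3 + L = m)
    (haa : q ⟨r + 2, hr⟩ = q ⟨r, by omega⟩) :
    pullSeq2 r hr q = moveRight (r + 1) L (moveRight (r + 2) L (swapSeq (r + 1) q)) := by
  funext ⟨k, hk⟩
  rw [moveRight_apply (by omega)]
  simp only [pullSeq2, moveRight_apply (show r + 2 + L < m by omega),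
    swapSeq_apply (show r + 1 + 1 < m by omega), Order.lt_add_one_iff, Nat.add_right_cancel_iff,
    Nat.add_left_cancel_iff, OfNat.ofNat_ne_one, ↓reduceIte, add_lt_add_iff_right,
    le_refl]
  split_ifs <;> first
    | rfl
    | omega
    | (congr 1; ext; simp only; omega)
    | rw [← haa]

end IjiSequences

section Iji

variable {I : Type} [DecidableEq I] {adj : I → I → Prop} {m : ℕ} {A : Type} [Ring A]
  (K : KLR I adj m A) {q : Fin m → I} {r : ℕ}

theorem exists_dotTransport_pullSeq1 (hm : r + 3 < m)
    (haa : q ⟨r + 2, by omega⟩ = q ⟨r, by omega⟩)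
    (hi : ∀ k : Fin m, r + 3 ≤ k.val → q k ≠ q ⟨r, by omega⟩ ∧ ¬ adj (q ⟨r, by omega⟩) (q k)) :
    ∃ u v, DotTransport K q ⟨m - 1, by omega⟩ (pullSeq1 r (by omega) q) ⟨m - 2, by omega⟩ u v ∧
      u * v = K.δ r (swapSeq (r + 1) (swapSeq r q)) * K.δ (r + 1) (swapSeq r q) * K.δ r q := by
  obtain ⟨L, rfl⟩ : ∃ L, m = r + 4 + L := ⟨m - (r + 4), by omega⟩
  have hfix : swapSeq (r + 1) (swapSeq r q) = swapSeq r q := by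
    refine swapSeq_eq_self (by omega) ?_
    rw [swapSeq_apply (by omega), swapSeq_apply_of_ne _ (by simp only; omega)
      (by simp only; omega)]
    simpa using haa.symm
  have hcross := DotTransport.mul_crossing_of_swapSeq_eq
    (dotTransport_crossing_of_far (K := K) q (a := r) (p := ⟨r + 4 + L - 1, by omega⟩)
      (by simp only; omega) (by simp only; omega))
    hfix (by simp only; omega) (by simp only; omega)
  obtain ⟨U, V, hmove⟩ := exists_invDotTransport_moveRight (K := K) (c := swapSeq r q) (a := r + 2)
    (L := L) (by omega) (fun k hk _ => by
      rw [swapSeq_apply_of_ne _ (by simp) (by simp), swapSeq_apply_of_ne _ (by omega) (by omega),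
        haa]
      exact ⟨(hi k (by omega)).1.symm, (hi k (by omega)).2⟩)
    (p := ⟨r + 4 + L - 1, by omega⟩) (t := ⟨r + 4 + L - 2, by omega⟩) (by simp only; omega)
    (by simp only; omega)
  rw [pullSeq1_eq_moveRight (L := L + 1) _ (by omega) haa]
  refine ⟨_, _, hcross.comp hmove.toDotTransport, ?_⟩
  rw [hcross.comp_mul_comp hmove, hfix]

theorem exists_dotTransport_pullSeq2 (hm : r + 3 < m)
    (haa : q ⟨r + 2, by omega⟩ = q ⟨r, by omega⟩)
    (hi : ∀ k : Fin m, r + 3 ≤ k.val → q k ≠ q ⟨r, by omega⟩ ∧ ¬ adj (q ⟨r, by omega⟩) (q k))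
    (hj : ∀ k : Fin m, r + 3 ≤ k.val →
      q k ≠ q ⟨r + 1, by omega⟩ ∧ ¬ adj (q ⟨r + 1, by omega⟩) (q k)) :
    ∃ u v, DotTransport K q ⟨m - 1, by omega⟩ (pullSeq2 r (by omega) q) ⟨m - 3, by omega⟩ u v ∧
      u * v = K.δ (r + 1) (swapSeq r (swapSeq (r + 1) q)) * K.δ r (swapSeq (r + 1) q) *
        K.δ (r + 1) q := by
  obtain ⟨L, rfl⟩ : ∃ L, m = r + 4 + L := ⟨m - (r + 4), by omega⟩
  have hfix : swapSeq r (swapSeq (r + 1) q) = swapSeq (r + 1) q := by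
    refine swapSeq_eq_self (by omega) ?_
    rw [swapSeq_apply_of_ne _ (by simp only; omega) (by simp only; omega),
      swapSeq_apply (by omega)]
    simpa using haa.symm
  have hcross := DotTransport.mul_crossing_of_swapSeq_eq
    (dotTransport_crossing_of_far (K := K) q (a := r + 1) (p := ⟨r + 4 + L - 1, by omega⟩)
      (by simp only; omega) (by simp only; omega))
    hfix (by simp only; omega) (by simp only; omega)
  obtain ⟨U, V, hmove⟩ := exists_invDotTransport_moveRight (K := K) (c := swapSeq (r + 1) q)
    (a := r + 2) (L := L) (by omega) (fun k hk _ => by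
      rw [swapSeq_apply (by omega), swapSeq_apply_of_ne _ (by omega) (by omega)]
      simpa using ⟨(hj k (by omega)).1.symm, (hj k (by omega)).2⟩)
    (p := ⟨r + 4 + L - 1, by omega⟩) (t := ⟨r + 4 + L - 2, by omega⟩) (by simp only; omega)
    (by simp only; omega)
  obtain ⟨U', V', hmove'⟩ := exists_invDotTransport_moveRight (K := K)
    (c := moveRight (r + 2) (L + 1) (swapSeq (r + 1) q)) (a := r + 1) (L := L) (by omega)
    (fun k hk hk' => by
      have hstart : moveRight (r + 2) (L + 1) (swapSeq (r + 1) q) ⟨r + 1, by omega⟩ =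
          q ⟨r, by omega⟩ := by
        rw [moveRight_apply (by omega), if_pos (by simp only; omega), swapSeq_apply (by omega)]
        simpa using haa
      have hshift : moveRight (r + 2) (L + 1) (swapSeq (r + 1) q) k = q ⟨k + 1, by omega⟩ := by
        rw [moveRight_apply (by omega), if_neg (by omega), dif_pos (by omega)]
        exact swapSeq_apply_of_ne _ (by simp only; omega) (by simp only; omega)
      rw [hstart, hshift]
      exact ⟨(hi _ (by simp only; omega)).1.symm, (hi _ (by simp only; omega)).2⟩)
    (p := ⟨r + 4 + L - 2, by omega⟩) (t := ⟨r + 4 + L - 3, by omega⟩) (by simp only; omega)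
    (by simp only; omega)
  rw [pullSeq2_eq_moveRight (L := L + 1) _ (by omega) haa]
  refine ⟨_, _, hcross.comp (hmove.comp hmove').toDotTransport, ?_⟩
  rw [hcross.comp_mul_comp (hmove.comp hmove'), hfix]

end Iji

/-- For adjacent vertices (`i·j = -1`), the sequence
`i' i j i i''` (with neither `i` nor `j` adjacent or equal to any vertex of
`i''`) has an `m`-factorization through the two sequences `i' j i i'' i` and
`i' i i'' i j`, arising from the cubic relation `ψ_L - ψ_R = 1` applied at the
`iji` triple. -/
theorem iji_triple_factorization {I : Type} [DecidableEq I] {adj : I → I → Prop}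
    {m : ℕ} {A : Type} [Ring A] (K : KLR I adj m A) (q : Fin m → I)
    (r : ℕ) (hm : r + 4 ≤ m)
    (haa : q ⟨r + 2, by omega⟩ = q ⟨r, by omega⟩)
    (hadj : adj (q ⟨r, by omega⟩) (q ⟨r + 1, by omega⟩))
    (htail : ∀ k : Fin m, r + 3 ≤ k.val →
      q k ≠ q ⟨r, by omega⟩ ∧ ¬ adj (q ⟨r, by omega⟩) (q k) ∧
      q k ≠ q ⟨r + 1, by omega⟩ ∧ ¬ adj (q ⟨r + 1, by omega⟩) (q k)) :
    RFactorization K q ⟨m - 1, by omega⟩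
      ![pullSeq1 r (by omega) q, pullSeq2 r (by omega) q]
      ![⟨m - 2, by omega⟩, ⟨m - 3, by omega⟩] := by
  have hi : ∀ k : Fin m, r + 3 ≤ k.val → q k ≠ q ⟨r, by omega⟩ ∧ ¬ adj (q ⟨r, by omega⟩) (q k) :=
    fun k hk => ⟨(htail k hk).1, (htail k hk).2.1⟩
  obtain ⟨u₀, v₀, h₀, hψL⟩ := exists_dotTransport_pullSeq1 K (by omega) haa hi
  obtain ⟨u₁, v₁, h₁, hψR⟩ :=
    exists_dotTransport_pullSeq2 K (by omega) haa hi fun k hk => (htail k hk).2.2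
  refine rFactorization_of_dotTransport ![u₀, -u₁] ![v₀, v₁]
    (Fin.forall_fin_two.2 ⟨h₀, h₁.neg_left⟩) ?_
  calc K.e q = u₀ * v₀ - u₁ * v₁ := by
        rw [hψL, hψR]; exact (K.braid_hard r (by omega) q haa.symm hadj).symm
    _ = ∑ a, ![u₀, -u₁] a * ![v₀, v₁] a := by
        rw [Fin.sum_univ_two, sub_eq_add_neg, ← neg_mul]; rfl

end KLRPaper
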